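/- arXiv:1710.07167 — 2 statements merged into one kernel-verified Lean document; each statement's English description precedes it below -/
import Mathlib

section
/- There is no deterministic sequence (h_k) of real numbers such that, for an i.i.d. sequence (X_i) of real random variables with finite positive variance, the event { liminf_{k→∞} (h_k + Σ_{i=1}^k X_i) ∈ (−∞, ∞) and the liminf is finite and the corresponding exponentiated quantity lies in (0,∞) } has probability one. More precisely: if (X_i) are i.i.d. with Var(X_1) > 0 and E|X_1| < ∞, then for every real sequence (h_k), the probability that liminf_{k→∞} (h_k + Σ_{i=1}^k X_i) is a finite real number is strictly less than 1 (in fact the liminf is −∞ or the sequence is unbounded above on a set of positive probability). -/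
/-!
Suppose the liminf `L` were a.s. finite. For every `k` it splits a.s. as `L = S_k + L_k`, where
`S_k = X_0 + ⋯ + X_{k-1}` and `L_k`, the liminf built from the summands `X_i` with `i ≥ k`, is
independent of `S_k`. Taking characteristic functions, `|φ_L(t)| ≤ |φ_X(t)|^k` for every `k`, so
`φ_L` vanishes wherever `|φ_X| < 1`. As `X_0` is not a.s. constant, such `t` accumulate at `0`,
which contradicts `φ_L(0) = 1` and the continuity of `φ_L`.
-/

open MeasureTheory ProbabilityTheory Filter Finset Topology

open Complex Real in
lemma eq_of_cexp_mul_I_eq_of_irrational {r t x y : ℝ} (hr : Irrational r) (ht : t ≠ 0)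
    (h₁ : cexp (t * x * I) = cexp (t * y * I))
    (h₂ : cexp (r * t * x * I) = cexp (r * t * y * I)) : x = y := by
  obtain ⟨n, hn⟩ := exp_eq_exp_iff_exists_int.mp h₁
  obtain ⟨m, hm⟩ := exp_eq_exp_iff_exists_int.mp h₂
  have hn' : t * x = t * y + n * (2 * π) := by simpa using congrArg im hn
  have hm' : r * t * x = r * t * y + m * (2 * π) := by simpa using congrArg im hm
  have hrn : r * n = m := by
    apply mul_right_cancel₀ (by positivity : 2 * π ≠ 0)
    linear_combination hm' - r * hn'
  by_contra hxy
  have hn0 : n ≠ 0 := by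
    rintro rfl
    exact hxy (mul_left_cancel₀ ht (by simpa using hn'))
  exact (hr.mul_intCast hn0).ne_int m hrn

open Complex in
lemma ae_cexp_mul_I_eq_charFun_of_norm_eq_one {ν : Measure ℝ} [IsProbabilityMeasure ν] {t : ℝ}
    (ht : ‖charFun ν t‖ = 1) : ∀ᵐ x : ℝ ∂ν, cexp (t * x * I) = charFun ν t := by
  have hle : ∀ᵐ x : ℝ ∂ν, ‖cexp (t * x * I)‖ ≤ 1 :=
    ae_of_all _ fun x => by norm_cast; rw [norm_exp_ofReal_mul_I]
  rcases ae_eq_const_or_norm_integral_lt_of_norm_le_const hle with h | h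
  · simpa [EventuallyEq, charFun_apply_real, average_eq_integral] using h
  · simp [← charFun_apply_real, ht] at h

lemma exists_ae_eq_of_eventually_norm_charFun_eq_one {ν : Measure ℝ} [IsProbabilityMeasure ν]
    (h : ∀ᶠ t in 𝓝 0, ‖charFun ν t‖ = 1) : ∃ c, ∀ᵐ x ∂ν, x = c := by
  -- `‖charFun ν t‖ = 1` confines `ν` to a coset of `(2π / t) ℤ`; two such lattices with
  -- incommensurable spacings meet in at most one point.
  have hpair : ∀ᶠ t in 𝓝[≠] 0, t ≠ 0 ∧ ‖charFun ν t‖ = 1 ∧ ‖charFun ν (√2 * t)‖ = 1 := by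
    refine eventually_mem_nhdsWithin.and (nhdsWithin_le_nhds (h.and ?_))
    exact (Continuous.tendsto' (continuous_const_mul √2) 0 0 (mul_zero _)).eventually h
  obtain ⟨t, ht, h₁, h₂⟩ := hpair.exists
  have hae := (ae_cexp_mul_I_eq_charFun_of_norm_eq_one h₁).and
    (ae_cexp_mul_I_eq_charFun_of_norm_eq_one h₂)
  obtain ⟨c, hc₁, hc₂⟩ := hae.exists
  refine ⟨c, hae.mono fun x ⟨hx₁, hx₂⟩ => ?_⟩
  refine eq_of_cexp_mul_I_eq_of_irrational irrational_sqrt_two ht (hx₁.trans hc₁.symm) ?_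
  push_cast at hx₂ hc₂ ⊢
  rw [hx₂, hc₂]

lemma EReal.liminf_coe_add {α : Type*} {f : Filter α} [f.NeBot] (c : ℝ) (u : α → EReal) :
    liminf (fun x => (c : EReal) + u x) f = c + liminf u f := by
  refine le_antisymm ?_ ?_
  · have := liminf_add_le (f := f) (u := fun _ => (c : EReal)) (v := u) (.inl (by simp))
      (.inl (by simp))
    rwa [limsup_const] at this
  · have := le_liminf_add (f := f) (u := fun _ => (c : EReal)) (v := u)
    rwa [liminf_const] at this

lemma measurableSet_exists_eq_coe {Ω : Type*} [MeasurableSpace Ω] {f : Ω → EReal}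
    (hf : Measurable f) : MeasurableSet {ω | ∃ c : ℝ, f ω = c} := by
  convert hf EReal.measurableEmbedding_coe.measurableSet_range using 1
  ext ω
  simp [eq_comm]

noncomputable def tailLiminf (h a : ℕ → ℝ) (k : ℕ) : EReal :=
  liminf (fun m => ((h m + ∑ i ∈ Ico k m, a i : ℝ) : EReal)) atTop

lemma tailLiminf_zero (h a : ℕ → ℝ) :
    tailLiminf h a 0 = liminf (fun m => ((h m + ∑ i ∈ range m, a i : ℝ) : EReal)) atTop := by
  simp only [tailLiminf, range_eq_Ico]

lemma tailLiminf_zero_eq_add (h a : ℕ → ℝ) (k : ℕ) :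
    tailLiminf h a 0 = ((∑ i ∈ range k, a i : ℝ) : EReal) + tailLiminf h a k := by
  rw [tailLiminf, tailLiminf, ← EReal.liminf_coe_add]
  refine liminf_congr (eventually_atTop.mpr ⟨k, fun m hm => ?_⟩)
  rw [← EReal.coe_add, range_eq_Ico, ← sum_Ico_consecutive a (Nat.zero_le k) hm]
  norm_cast
  ring

lemma toReal_tailLiminf_zero_eq_add {h a : ℕ → ℝ}
    (hfin : ∃ c : ℝ, tailLiminf h a 0 = c) (k : ℕ) :
    (tailLiminf h a 0).toReal = ∑ i ∈ range k, a i + (tailLiminf h a k).toReal := by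
  obtain ⟨c, hc⟩ := hfin
  have hsplit := tailLiminf_zero_eq_add h a k
  rw [hc] at hsplit ⊢
  generalize tailLiminf h a k = y at hsplit ⊢
  induction y using EReal.rec with
  | bot => simp at hsplit
  | top => simp at hsplit
  | coe z => exact_mod_cast hsplit

lemma measurable_tailLiminf {Ω : Type*} {m : MeasurableSpace Ω} (h : ℕ → ℝ) {X : ℕ → Ω → ℝ}
    (k : ℕ) (hX : ∀ i ≥ k, Measurable[m] (X i)) :
    Measurable[m] fun ω => tailLiminf h (X · ω) k :=
  Measurable.liminf fun _ => (measurable_const.add <|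
    Finset.measurable_sum _ fun i hi => hX i (mem_Ico.mp hi).1).coe_real_ereal

lemma measurable_biSup_comap {Ω ι β : Type*} [MeasurableSpace β] (X : ι → Ω → β) {s : Set ι}
    {i : ι} (hi : i ∈ s) : Measurable[⨆ j ∈ s, MeasurableSpace.comap (X j) ‹_›] (X i) :=
  (comap_measurable (X i)).mono (le_biSup (fun j => MeasurableSpace.comap (X j) _) hi) le_rfl

section PartialSums

variable {Ω : Type*} [MeasurableSpace Ω] {μ : Measure Ω} {X : ℕ → Ω → ℝ}

lemma charFun_map_partialSum (hindep : iIndepFun X μ)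
    (hident : ∀ i, IdentDistrib (X i) (X 0) μ μ) (k : ℕ) (t : ℝ) :
    charFun (μ.map (∑ i ∈ range k, X i)) t = charFun (μ.map (X 0)) t ^ k := by
  rw [(hindep.restrict _).charFun_map_finsetSum_eq_prod fun i _ => (hident i).aemeasurable_fst]
  simp [fun i => (hident i).map_eq]

lemma charFun_eq_zero_of_forall_ae_eq_partialSum_add [IsProbabilityMeasure μ]
    (hindep : iIndepFun X μ) (hident : ∀ i, IdentDistrib (X i) (X 0) μ μ)
    {Y : Ω → ℝ} {Z : ℕ → Ω → ℝ}
    (hZ : ∀ k, AEMeasurable (Z k) μ) (hSZ : ∀ k, IndepFun (∑ i ∈ range k, X i) (Z k) μ)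
    (hY : ∀ k, Y =ᵐ[μ] ∑ i ∈ range k, X i + Z k) {t : ℝ}
    (ht : ‖charFun (μ.map (X 0)) t‖ < 1) : charFun (μ.map Y) t = 0 := by
  have hS : ∀ k, AEMeasurable (∑ i ∈ range k, X i) μ :=
    fun k => Finset.aemeasurable_sum _ fun i _ => (hident i).aemeasurable_fst
  have hbound (k : ℕ) : ‖charFun (μ.map Y) t‖ ≤ ‖charFun (μ.map (X 0)) t‖ ^ k := by
    have := Measure.isProbabilityMeasure_map (hZ k)
    calc ‖charFun (μ.map Y) t‖
        = ‖charFun (μ.map (X 0)) t‖ ^ k * ‖charFun (μ.map (Z k)) t‖ := by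
          rw [Measure.map_congr (hY k), (hSZ k).charFun_map_add_eq_mul (hS k) (hZ k),
            Pi.mul_apply, charFun_map_partialSum hindep hident, norm_mul, norm_pow]
      _ ≤ ‖charFun (μ.map (X 0)) t‖ ^ k :=
          mul_le_of_le_one_right (by positivity) (norm_charFun_le_one t)
  exact norm_le_zero_iff.mp <|
    ge_of_tendsto' (tendsto_pow_atTop_nhds_zero_of_lt_one (norm_nonneg _) ht) hbound

lemma exists_ae_eq_const_of_forall_ae_eq_partialSum_add [IsProbabilityMeasure μ]
    (hindep : iIndepFun X μ) (hident : ∀ i, IdentDistrib (X i) (X 0) μ μ)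
    {Y : Ω → ℝ} {Z : ℕ → Ω → ℝ}
    (hZ : ∀ k, AEMeasurable (Z k) μ) (hSZ : ∀ k, IndepFun (∑ i ∈ range k, X i) (Z k) μ)
    (hY : ∀ k, Y =ᵐ[μ] ∑ i ∈ range k, X i + Z k) : ∃ c, ∀ᵐ ω ∂μ, X 0 ω = c := by
  have hYm : AEMeasurable Y μ := (hZ 0).congr (by simpa using (hY 0).symm)
  have := Measure.isProbabilityMeasure_map hYm
  have := Measure.isProbabilityMeasure_map (hident 0).aemeasurable_fst
  have hne : ∀ᶠ t in 𝓝 0, charFun (μ.map Y) t ≠ 0 :=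
    continuous_charFun.continuousAt.eventually_ne (by simp)
  obtain ⟨c, hc⟩ := exists_ae_eq_of_eventually_norm_charFun_eq_one <| hne.mono fun t ht =>
    (norm_charFun_le_one t).antisymm <| not_lt.mp fun hlt =>
      ht (charFun_eq_zero_of_forall_ae_eq_partialSum_add hindep hident hZ hSZ hY hlt)
  exact ⟨c, ae_of_ae_map (hident 0).aemeasurable_fst hc⟩

lemma indepFun_of_measurable_iSup_Iio_of_measurable_iSup_Ici (hmeas : ∀ i, Measurable (X i))
    (hindep : iIndepFun X μ) {k : ℕ} {S Z : Ω → ℝ}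
    (hS : Measurable[⨆ i ∈ Set.Iio k, MeasurableSpace.comap (X i) inferInstance] S)
    (hZ : Measurable[⨆ i ∈ Set.Ici k, MeasurableSpace.comap (X i) inferInstance] Z) :
    IndepFun S Z μ := by
  rw [IndepFun_iff_Indep]
  exact indep_of_indep_of_le_right (indep_of_indep_of_le_left
    (indep_iSup_of_disjoint (fun i => (hmeas i).comap_le) hindep.iIndep
      (Set.Iio_disjoint_Ici le_rfl)) hS.comap_le) hZ.comap_le

lemma indepFun_partialSum_toReal_tailLiminf (hmeas : ∀ i, Measurable (X i))
    (hindep : iIndepFun X μ) (h : ℕ → ℝ) (k : ℕ) :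
    IndepFun (∑ i ∈ range k, X i) (fun ω => (tailLiminf h (X · ω) k).toReal) μ := by
  refine indepFun_of_measurable_iSup_Iio_of_measurable_iSup_Ici hmeas hindep (k := k) ?_ ?_
  · rw [Finset.sum_fn]
    exact Finset.measurable_sum _ fun i hi =>
      measurable_biSup_comap X (Set.mem_Iio.mpr (mem_range.mp hi))
  · exact (measurable_tailLiminf h k fun i hi =>
      measurable_biSup_comap X (Set.mem_Ici.mpr hi)).ereal_toReal

end PartialSums

theorem no_deterministic_centering_sequence_general
    {Ω : Type*} [MeasurableSpace Ω] (μ : Measure Ω) [IsProbabilityMeasure μ]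
    (X : ℕ → Ω → ℝ) (hmeas : ∀ i, Measurable (X i))
    (hindep : iIndepFun X μ)
    (hident : ∀ i, IdentDistrib (X i) (X 0) μ μ)
    (hvar : 0 < variance (X 0) μ)
    (h : ℕ → ℝ) :
    μ {ω | ∃ L : ℝ,
        Filter.liminf (fun k : ℕ =>
          ((h k + ∑ i ∈ Finset.range k, X i ω : ℝ) : EReal)) Filter.atTop = (L : EReal)} < 1 := by
  simp_rw [← tailLiminf_zero]
  by_contra! hμE
  have hfin : ∀ᵐ ω ∂μ, ∃ c : ℝ, tailLiminf h (X · ω) 0 = c :=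
    (ae_iff_measure_eq (measurableSet_exists_eq_coe
      (measurable_tailLiminf h 0 fun i _ => hmeas i)).nullMeasurableSet).mpr
      (by simpa using le_antisymm prob_le_one hμE)
  obtain ⟨c, hc⟩ := exists_ae_eq_const_of_forall_ae_eq_partialSum_add hindep hident
    (Y := fun ω => (tailLiminf h (X · ω) 0).toReal)
    (fun k => (measurable_tailLiminf h k fun i _ => hmeas i).ereal_toReal.aemeasurable)
    (indepFun_partialSum_toReal_tailLiminf hmeas hindep h)
    (fun k => hfin.mono fun ω hω => by simpa using toReal_tailLiminf_zero_eq_add hω k)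
  have hvar0 : variance (X 0) μ = 0 := by
    rw [variance_congr hc]
    simp [variance_eq_integral measurable_const.aemeasurable]
  linarith

/-- for i.i.d. real random variables with finite mean and positive variance and
any deterministic sequence `(h_k)`, the probability that
`liminf_{k→∞} (h_k + Σ_{i=1}^k X_i)` is a finite real number is strictly less than one. -/
theorem no_deterministic_centering_sequence
    {Ω : Type*} [MeasurableSpace Ω] (μ : Measure Ω) [IsProbabilityMeasure μ]
    (X : ℕ → Ω → ℝ) (hmeas : ∀ i, Measurable (X i))
    (hindep : iIndepFun X μ)
    (hident : ∀ i, IdentDistrib (X i) (X 0) μ μ)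
    (hint : Integrable (X 0) μ) (hvar : 0 < variance (X 0) μ)
    (h : ℕ → ℝ) :
    μ {ω | ∃ L : ℝ,
        Filter.liminf (fun k : ℕ =>
          ((h k + ∑ i ∈ Finset.range k, X i ω : ℝ) : EReal)) Filter.atTop = (L : EReal)} < 1 :=
  no_deterministic_centering_sequence_general μ X hmeas hindep hident hvar h
end

section
/- Zero-infinity dichotomy transfer for packing measure: let F_τ be a random code-tree attractor for a family of uniformly bi-Lipschitz contractions (ratios in [c_min, c_max] ⊂ (0,1)), and let h be a doubling gauge function. Then 𝒫₀^h(F_τ) = ∞ implies 𝒫^h(F_τ) = ∞, and 𝒫₀^h(F_τ) = 0 implies 𝒫^h(F_τ) = 0, where 𝒫₀^h is the packing pre-measure and 𝒫^h(F) = inf{ Σ_i 𝒫₀^h(F_i) : F ⊆ ⋃_i F_i }. -/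
open MeasureTheory ProbabilityTheory Set Filter
open scoped ENNReal NNReal

/-- A family of similarity IFSs on `ℝ^d` indexed by `Λ`, with at most `𝒩` maps each,
satisfying the uniform open set condition and uniform bounds on branching and contraction
ratios; the underlying data for random code-trees with necks. -/
structure CodeTreeSystem (d 𝒩 : ℕ) (Λ : Type*) [MeasurableSpace Λ] where
  h𝒩 : 0 < 𝒩
  N : Λ → ℕ
  hN𝒩 : ∀ l, N l ≤ 𝒩
  hNpos : ∀ l, 1 ≤ N l
  f : (l : Λ) → Fin (N l) → EuclideanSpace ℝ (Fin d) → EuclideanSpace ℝ (Fin d)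
  c : (l : Λ) → Fin (N l) → ℝ
  cmin : ℝ
  cmax : ℝ
  hcmin : 0 < cmin
  hcmax : cmax < 1
  hc : ∀ l i, c l i ∈ Set.Icc cmin cmax
  hbilip : ∀ l i x y, cmin * dist x y ≤ dist (f l i x) (f l i y) ∧
    dist (f l i x) (f l i y) ≤ cmax * dist x y
  /-- the open set of the uniform open set condition -/
  O : Set (EuclideanSpace ℝ (Fin d))
  hOopen : IsOpen O
  hOne : O.Nonempty
  hObdd : Bornology.IsBounded O
  hOsub : ∀ l i, f l i '' O ⊆ O
  hOdisj : ∀ l, Pairwise fun i j => Disjoint (f l i '' O) (f l j '' O)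
  /-- a large compact seed set -/
  Δ : Set (EuclideanSpace ℝ (Fin d))
  hΔcompact : IsCompact Δ
  hΔne : Δ.Nonempty
  hΔsub : ∀ l i, f l i '' Δ ⊆ Δ

namespace CodeTreeSystem

variable {d 𝒩 : ℕ} {Λ : Type*} [MeasurableSpace Λ]

/-- Whether a node `v` of the `𝒩`-ary tree survives in the code-tree labelled by `τ`. -/
def alive (R : CodeTreeSystem d 𝒩 Λ) : (List (Fin 𝒩) → Λ) → List (Fin 𝒩) → Bool
  | _, [] => true
  | τ, a :: v => decide ((a : ℕ) < R.N (τ [])) && R.alive (fun w => τ (a :: w)) v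

/-- The composition of maps coded by the node `v` in the code-tree labelled by `τ`
(dead branches act as the identity). -/
def nodeMap (R : CodeTreeSystem d 𝒩 Λ) :
    (List (Fin 𝒩) → Λ) → List (Fin 𝒩) →
      EuclideanSpace ℝ (Fin d) → EuclideanSpace ℝ (Fin d)
  | _, [] => id
  | τ, a :: v =>
      (if h : (a : ℕ) < R.N (τ []) then R.f (τ []) ⟨a, h⟩ else id) ∘
        R.nodeMap (fun w => τ (a :: w)) v

/-- The contraction ratio `c_e` of the composed map coded by the node `v`. -/
def crat (R : CodeTreeSystem d 𝒩 Λ) : (List (Fin 𝒩) → Λ) → List (Fin 𝒩) → ℝ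
  | _, [] => 1
  | τ, a :: v =>
      (if h : (a : ℕ) < R.N (τ []) then R.c (τ []) ⟨a, h⟩ else 1) *
        R.crat (fun w => τ (a :: w)) v

/-- The attractor `F_τ` of the code-tree labelled by `τ`. -/
def attractor (R : CodeTreeSystem d 𝒩 Λ) (τ : List (Fin 𝒩) → Λ) :
    Set (EuclideanSpace ℝ (Fin d)) :=
  ⋂ k : ℕ, ⋃ (v : Fin k → Fin 𝒩) (_ : R.alive τ (List.ofFn v) = true),
    R.nodeMap τ (List.ofFn v) '' R.Δ

/-- `n` is a neck level of the code-tree `τ`: all surviving level-`n` subtrees agree. -/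
def IsNeck (R : CodeTreeSystem d 𝒩 Λ) (τ : List (Fin 𝒩) → Λ) (n : ℕ) : Prop :=
  ∀ v w : List (Fin 𝒩), v.length = n → w.length = n →
    R.alive τ v = true → R.alive τ w = true → ∀ u, τ (v ++ u) = τ (w ++ u)

/-- The neck shift: shift the code-tree past its first neck level `N₁ τ`. -/
def neckShift (R : CodeTreeSystem d 𝒩 Λ) (N₁ : (List (Fin 𝒩) → Λ) → ℕ)
    (τ : List (Fin 𝒩) → Λ) : List (Fin 𝒩) → Λ :=
  fun w => τ (List.replicate (N₁ τ) (⟨0, R.h𝒩⟩ : Fin 𝒩) ++ w)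

/-- The sum `Σ_{e ∈ T_τ^n, alive} φ(c_e)` over the surviving level-`n` codings. -/
noncomputable def levelSum (R : CodeTreeSystem d 𝒩 Λ) (τ : List (Fin 𝒩) → Λ) (n : ℕ)
    (φ : ℝ → ℝ) : ℝ :=
  ∑ v : Fin n → Fin 𝒩,
    if R.alive τ (List.ofFn v) = true then φ (R.crat τ (List.ofFn v)) else 0

end CodeTreeSystem

/-- The Hausdorff measure associated with a gauge function `h`. -/
noncomputable def gaugeHausdorff {X : Type*} [EMetricSpace X] [MeasurableSpace X] [BorelSpace X]
    (h : ℝ → ℝ) : Measure X :=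
  Measure.mkMetric (fun r : ℝ≥0∞ => ENNReal.ofReal (h r.toReal))

/-- A gauge function: non-decreasing, positive on `(0,∞)`, tending to `0` at `0⁺`. -/
def IsGauge (h : ℝ → ℝ) : Prop :=
  Monotone h ∧ (∀ t, 0 < t → 0 < h t) ∧ Tendsto h (nhdsWithin 0 (Set.Ioi 0)) (nhds 0)

open scoped Topology

variable {X : Type*} [MetricSpace X]

/-- The `δ`-packing pre-measure for the gauge `h`: supremum of `Σ h(diam Bᵢ)` over countable
collections of disjoint closed balls centred in `F` with radii at most `δ`. -/
noncomputable def packPreδ (h : ℝ → ℝ) (δ : ℝ) (F : Set X) : ℝ≥0∞ :=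
  ⨆ (P : Set (X × ℝ)) (_ : P.Countable ∧ (∀ p ∈ P, p.1 ∈ F ∧ 0 < p.2 ∧ p.2 ≤ δ) ∧
      (∀ p ∈ P, ∀ q ∈ P, p ≠ q →
        Disjoint (Metric.closedBall p.1 p.2) (Metric.closedBall q.1 q.2))),
    ∑' p : P, ENNReal.ofReal (h (2 * (p : X × ℝ).2))

/-- The packing pre-measure `𝒫₀^h(F) = lim_{δ→0} 𝒫_δ^h(F)`. -/
noncomputable def packPre (h : ℝ → ℝ) (F : Set X) : ℝ≥0∞ :=
  ⨅ (δ : ℝ) (_ : 0 < δ), packPreδ h δ F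

/-- The packing measure `𝒫^h(F) = inf { Σᵢ 𝒫₀^h(Fᵢ) : F ⊆ ⋃ᵢ Fᵢ }`. -/
noncomputable def packMeasure (h : ℝ → ℝ) (F : Set X) : ℝ≥0∞ :=
  ⨅ (C : ℕ → Set X) (_ : F ⊆ ⋃ n, C n), ∑' n, packPre h (C n)


/-! Only the infinite case needs an argument, since `𝒫^h ≤ 𝒫₀^h`. Infinite pre-measure passes
to every subtree below a neck: at a neck level the attractor is a finite union of contracted copies
of a single subtree attractor, and neither finite unions nor contractions create infinite
pre-measure. It passes back to each piece `f_v(F_{σ^v τ})`, because `f_v` shrinks distances by at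
most the factor `c_min ^ |v|` and, by the doubling property, shrinking all radii by a bounded factor
changes `𝒫_δ^h` by a bounded factor. As the pieces at deep necks are small, every relatively open
subset of the attractor has infinite pre-measure. Given a countable cover, Baire's theorem on the
compact attractor puts such an open subset inside the closure of one member of the cover, and
taking closures changes the pre-measure by at most the doubling constant. -/

open Metric

theorem ENNReal.eq_top_of_top_le_mul {M x : ℝ≥0∞} (hM : M ≠ ⊤) (hx : ⊤ ≤ M * x) :
    x = ⊤ :=
  ((ENNReal.mul_eq_top.1 (top_le_iff.1 hx)).resolve_right (hM ·.1)).2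

section Packing

def IsPacking (δ : ℝ) (F : Set X) (P : Set (X × ℝ)) : Prop :=
  P.Countable ∧ (∀ p ∈ P, p.1 ∈ F ∧ 0 < p.2 ∧ p.2 ≤ δ) ∧
    (∀ p ∈ P, ∀ q ∈ P, p ≠ q → Disjoint (closedBall p.1 p.2) (closedBall q.1 q.2))

theorem IsPacking.sep {δ : ℝ} {F : Set X} {P : Set (X × ℝ)} (hP : IsPacking δ F P)
    (A : Set X) : IsPacking δ A {p ∈ P | p.1 ∈ A} :=
  ⟨hP.1.mono (Set.sep_subset _ _), fun p hp => ⟨hp.2, (hP.2.1 p hp.1).2⟩,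
    fun p hp q hq => hP.2.2 p hp.1 q hq.1⟩

variable {h : ℝ → ℝ}

theorem le_packPreδ {δ : ℝ} {F : Set X} {P : Set (X × ℝ)} (hP : IsPacking δ F P) :
    ∑' p : P, ENNReal.ofReal (h (2 * (p : X × ℝ).2)) ≤ packPreδ h δ F :=
  le_iSup₂ (f := fun P (_ : IsPacking δ F P) =>
    ∑' p : P, ENNReal.ofReal (h (2 * (p : X × ℝ).2))) P hP

theorem packPreδ_le {δ : ℝ} {F : Set X} {c : ℝ≥0∞}
    (H : ∀ P, IsPacking δ F P → ∑' p : P, ENNReal.ofReal (h (2 * (p : X × ℝ).2)) ≤ c) :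
    packPreδ h δ F ≤ c :=
  iSup₂_le H

theorem packPreδ_mono {δ δ' : ℝ} {A B : Set X} (hδ : δ ≤ δ') (hAB : A ⊆ B) :
    packPreδ h δ A ≤ packPreδ h δ' B :=
  packPreδ_le fun _ ⟨hc, hmem, hdisj⟩ => le_packPreδ
    ⟨hc, fun p hp => ⟨hAB (hmem p hp).1, (hmem p hp).2.1, (hmem p hp).2.2.trans hδ⟩, hdisj⟩

theorem packPre_le_packPreδ {δ : ℝ} (hδ : 0 < δ) (A : Set X) : packPre h A ≤ packPreδ h δ A :=
  iInf₂_le δ hδ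

theorem packPre_mono {A B : Set X} (hAB : A ⊆ B) : packPre h A ≤ packPre h B :=
  le_iInf₂ fun _ hδ => (packPre_le_packPreδ hδ A).trans (packPreδ_mono le_rfl hAB)

theorem packPre_empty : packPre h (∅ : Set X) = 0 := by
  refine le_zero_iff.1 <| (packPre_le_packPreδ one_pos ∅).trans <| packPreδ_le fun P hP => ?_
  rw [Set.eq_empty_of_forall_notMem fun p hp => (hP.2.1 p hp).1]
  simp

theorem packPreδ_union_le (δ : ℝ) (A B : Set X) :
    packPreδ h δ (A ∪ B) ≤ packPreδ h δ A + packPreδ h δ B := by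
  refine packPreδ_le fun P hP => ?_
  have hsplit : P ⊆ {p ∈ P | p.1 ∈ A} ∪ {p ∈ P | p.1 ∈ B} := fun p hp =>
    (hP.2.1 p hp).1.imp (⟨hp, ·⟩) (⟨hp, ·⟩)
  calc ∑' p : P, ENNReal.ofReal (h (2 * (p : X × ℝ).2))
      ≤ ∑' p : ↥({p ∈ P | p.1 ∈ A} ∪ {p ∈ P | p.1 ∈ B}),
          ENNReal.ofReal (h (2 * (p : X × ℝ).2)) :=
        ENNReal.tsum_mono_subtype (fun p : X × ℝ => ENNReal.ofReal (h (2 * p.2))) hsplit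
    _ ≤ _ := ENNReal.tsum_union_le (fun p : X × ℝ => ENNReal.ofReal (h (2 * p.2))) _ _
    _ ≤ _ := add_le_add (le_packPreδ (hP.sep A)) (le_packPreδ (hP.sep B))

theorem packPre_union_le (A B : Set X) : packPre h (A ∪ B) ≤ packPre h A + packPre h B :=
  ENNReal.le_iInf₂_add_iInf₂ fun _ hδ₁ _ hδ₂ =>
    (packPre_le_packPreδ (lt_min hδ₁ hδ₂) _).trans <| (packPreδ_union_le _ A B).trans <|
      add_le_add (packPreδ_mono (min_le_left _ _) subset_rfl)
        (packPreδ_mono (min_le_right _ _) subset_rfl)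

theorem packPre_biUnion_le {ι : Type*} (s : Finset ι) (A : ι → Set X) :
    packPre h (⋃ i ∈ s, A i) ≤ ∑ i ∈ s, packPre h (A i) := by
  classical
  induction s using Finset.induction_on with
  | empty => simp [packPre_empty]
  | insert a s ha ih =>
    rw [Finset.set_biUnion_insert, Finset.sum_insert ha]
    exact (packPre_union_le _ _).trans (by gcongr)

theorem packMeasure_le_packPre (F : Set X) : packMeasure h F ≤ packPre h F := by
  have hcover : F ⊆ ⋃ n : ℕ, if n = 0 then F else ∅ :=
    Set.subset_iUnion_of_subset 0 subset_rfl
  refine (iInf₂_le (fun n : ℕ => if n = 0 then F else ∅) hcover).trans_eq ?_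
  rw [tsum_eq_single 0 fun n hn => by simp [hn, packPre_empty]]
  simp

theorem packPre_le_mul_of_packPreδ_le {A B : Set X} {M : ℝ≥0∞} (hM : M ≠ ⊤)
    (H : ∀ δ > 0, ∃ δ' > 0, packPreδ h δ' A ≤ M * packPreδ h δ B) :
    packPre h A ≤ M * packPre h B := by
  rcases eq_or_ne M 0 with rfl | hM₀
  · obtain ⟨δ', hδ', hle⟩ := H 1 one_pos
    simpa using (packPre_le_packPreδ hδ' A).trans hle
  simp only [packPre, ENNReal.mul_iInf_of_ne hM₀ hM]
  refine le_iInf₂ fun δ hδ => ?_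
  obtain ⟨δ', hδ', hle⟩ := H δ hδ
  exact (packPre_le_packPreδ hδ' A).trans hle

theorem IsCompact.exists_inter_ball_subset_closure {K : Set X} (hK : IsCompact K)
    (hne : K.Nonempty) {C : ℕ → Set X} (hC : K ⊆ ⋃ n, C n) :
    ∃ n, ∃ z ∈ K, ∃ ε > 0, K ∩ ball z ε ⊆ closure (K ∩ C n) := by
  have : Nonempty K := hne.to_subtype
  have : CompactSpace K := isCompact_iff_compactSpace.1 hK
  have hcover : ⋃ n, closure ((↑) ⁻¹' C n : Set K) = Set.univ :=
    Set.eq_univ_of_forall fun z =>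
      (Set.mem_iUnion.1 (hC z.2)).elim fun n hn => Set.mem_iUnion.2 ⟨n, subset_closure hn⟩
  obtain ⟨n, z, hz⟩ :=
    nonempty_interior_of_iUnion_of_closed (fun _ => isClosed_closure) hcover
  obtain ⟨ε, hε, hball⟩ := Metric.isOpen_iff.1 isOpen_interior z hz
  refine ⟨n, z, z.2, ε, hε, fun y ⟨hyK, hyz⟩ => ?_⟩
  have hy : (⟨y, hyK⟩ : K) ∈ closure ((↑) ⁻¹' C n : Set K) :=
    interior_subset (hball (show dist (⟨y, hyK⟩ : K) z < ε from hyz))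
  rwa [closure_subtype, Subtype.image_preimage_coe] at hy

end Packing

section NormedPacking

variable {E : Type*} [NormedAddCommGroup E] [NormedSpace ℝ E] {h : ℝ → ℝ}

theorem IsPacking.add_lt_dist {δ : ℝ} {F : Set E} {P : Set (E × ℝ)} (hP : IsPacking δ F P)
    {p q : E × ℝ} (hp : p ∈ P) (hq : q ∈ P) (hne : p ≠ q) : p.2 + q.2 < dist p.1 q.1 :=
  (disjoint_closedBall_closedBall_iff (hP.2.1 p hp).2.1.le (hP.2.1 q hq).2.1.le).1
    (hP.2.2 p hp q hq hne)

theorem packPreδ_le_mul_of_map {δ δ' : ℝ} {F G : Set E} (T : E × ℝ → E × ℝ) (M : ℝ≥0∞)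
    (hmem : ∀ p : E × ℝ, p.1 ∈ F → 0 < p.2 → p.2 ≤ δ →
      (T p).1 ∈ G ∧ 0 < (T p).2 ∧ (T p).2 ≤ δ')
    (hval : ∀ p : E × ℝ, p.1 ∈ F → 0 < p.2 →
      ENNReal.ofReal (h (2 * p.2)) ≤ M * ENNReal.ofReal (h (2 * (T p).2)))
    (hsep : ∀ p q : E × ℝ, p.1 ∈ F → q.1 ∈ F → 0 < p.2 → 0 < q.2 →
      p.2 + q.2 < dist p.1 q.1 → (T p).2 + (T q).2 < dist (T p).1 (T q).1) :
    packPreδ h δ F ≤ M * packPreδ h δ' G := by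
  refine packPreδ_le fun P hP => ?_
  have hsepP : ∀ p ∈ P, ∀ q ∈ P, p ≠ q → (T p).2 + (T q).2 < dist (T p).1 (T q).1 :=
    fun p hp q hq hne => hsep p q (hP.2.1 p hp).1 (hP.2.1 q hq).1 (hP.2.1 p hp).2.1
      (hP.2.1 q hq).2.1 (hP.add_lt_dist hp hq hne)
  have hmemP : ∀ p ∈ P, (T p).1 ∈ G ∧ 0 < (T p).2 ∧ (T p).2 ≤ δ' :=
    fun p hp => hmem p (hP.2.1 p hp).1 (hP.2.1 p hp).2.1 (hP.2.1 p hp).2.2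
  have hinj : Set.InjOn T P := fun p hp q hq hpq => by
    by_contra hne
    have hT := hsepP p hp q hq hne
    rw [hpq, dist_self] at hT
    linarith [(hmemP q hq).2.1]
  have hTP : IsPacking δ' G (T '' P) := by
    refine ⟨hP.1.image T, ?_, ?_⟩
    · rintro _ ⟨p, hp, rfl⟩
      exact hmemP p hp
    · rintro _ ⟨p, hp, rfl⟩ _ ⟨q, hq, rfl⟩ hne
      exact closedBall_disjoint_closedBall (hsepP p hp q hq fun e => hne (e ▸ rfl))
  calc ∑' p : P, ENNReal.ofReal (h (2 * (p : E × ℝ).2))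
      ≤ ∑' p : P, M * ENNReal.ofReal (h (2 * (T p).2)) :=
        ENNReal.tsum_le_tsum fun p => hval p (hP.2.1 p p.2).1 (hP.2.1 p p.2).2.1
    _ = M * ∑' q : ↥(T '' P), ENNReal.ofReal (h (2 * (q : E × ℝ).2)) := by
        rw [ENNReal.tsum_mul_left,
          tsum_image (fun q : E × ℝ => ENNReal.ofReal (h (2 * q.2))) hinj]
    _ ≤ M * packPreδ h δ' G := by gcongr; exact le_packPreδ hTP

theorem apply_two_pow_mul_le {lam : ℝ} (hlam : 0 ≤ lam)
    (hdbl : ∀ x : ℝ, 0 < x → h (2 * x) ≤ lam * h x) (k : ℕ) {x : ℝ} (hx : 0 < x) :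
    h (2 ^ k * x) ≤ lam ^ k * h x := by
  induction k with
  | zero => simp
  | succ k ih =>
    calc h (2 ^ (k + 1) * x) = h (2 * (2 ^ k * x)) := by ring_nf
      _ ≤ lam * h (2 ^ k * x) := hdbl _ (by positivity)
      _ ≤ lam * (lam ^ k * h x) := by gcongr
      _ = lam ^ (k + 1) * h x := by ring

/-- Halving the radii leaves room to move each centre into `A` by less than a quarter of its
radius while keeping the balls disjoint. -/
theorem packPreδ_closure_le {lam : ℝ} (hlam : 0 ≤ lam)
    (hdbl : ∀ x : ℝ, 0 < x → h (2 * x) ≤ lam * h x) (δ : ℝ) (A : Set E) :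
    packPreδ h δ (closure A) ≤ ENNReal.ofReal lam * packPreδ h δ A := by
  have hnear : ∀ p : E × ℝ, p.1 ∈ closure A → 0 < p.2 →
      ∃ q : E × ℝ, q.1 ∈ A ∧ dist q.1 p.1 < p.2 / 4 ∧ q.2 = p.2 / 2 := fun p hp hr => by
    obtain ⟨y, hy, hyp⟩ := Metric.mem_closure_iff.1 hp (p.2 / 4) (by positivity)
    exact ⟨(y, p.2 / 2), hy, by rwa [dist_comm], rfl⟩
  choose! T hTA hTdist hTrad using hnear
  refine packPreδ_le_mul_of_map T _ (fun p hp hr hrδ => ?_) (fun p hp hr => ?_)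
    (fun p q hp hq hr hr' hlt => ?_)
  · rw [hTrad p hp hr]
    exact ⟨hTA p hp hr, by positivity, by linarith⟩
  · rw [hTrad p hp hr, mul_div_cancel₀ _ two_ne_zero, ← ENNReal.ofReal_mul hlam]
    exact ENNReal.ofReal_le_ofReal (hdbl p.2 hr)
  · have := dist_triangle4 p.1 (T p).1 (T q).1 q.1
    have := dist_comm p.1 (T p).1
    linarith [hTdist p hp hr, hTdist q hq hr', hTrad p hp hr, hTrad q hq hr']

theorem packPre_closure_le {lam : ℝ} (hlam : 0 ≤ lam)
    (hdbl : ∀ x : ℝ, 0 < x → h (2 * x) ≤ lam * h x) (A : Set E) :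
    packPre h (closure A) ≤ ENNReal.ofReal lam * packPre h A :=
  packPre_le_mul_of_packPreδ_le ENNReal.ofReal_ne_top fun δ hδ =>
    ⟨δ, hδ, packPreδ_closure_le hlam hdbl δ A⟩

theorem packPre_image_le {C : ℝ} (hmono : Monotone h) (hC : 0 < C) (hC1 : C ≤ 1) {g : E → E}
    (hg : ∀ x y, dist (g x) (g y) ≤ C * dist x y) (A : Set E) :
    packPre h (g '' A) ≤ packPre h A := by
  have hpre : ∀ p : E × ℝ, p.1 ∈ g '' A →
      ∃ q : E × ℝ, q.1 ∈ A ∧ g q.1 = p.1 ∧ q.2 = p.2 / C :=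
    fun p ⟨y, hy, hyp⟩ => ⟨(y, p.2 / C), hy, hyp, rfl⟩
  choose! T hTA hTg hTrad using hpre
  refine (packPre_le_mul_of_packPreδ_le ENNReal.one_ne_top fun δ hδ =>
    ⟨C * δ, by positivity, packPreδ_le_mul_of_map T 1 (fun p hp hr hrδ => ?_)
      (fun p hp hr => ?_) (fun p q hp hq hr hr' hlt => ?_)⟩).trans_eq (one_mul _)
  · rw [hTrad p hp]
    exact ⟨hTA p hp, by positivity, by rwa [div_le_iff₀ hC, mul_comm]⟩
  · rw [one_mul, hTrad p hp]
    refine ENNReal.ofReal_le_ofReal (hmono ?_)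
    rw [mul_div_assoc']
    exact le_div_self (by positivity) hC hC1
  · rw [hTrad p hp, hTrad q hq, ← add_div, div_lt_iff₀ hC]
    calc p.2 + q.2 < dist p.1 q.1 := hlt
      _ = dist (g (T p).1) (g (T q).1) := by rw [hTg p hp, hTg q hq]
      _ ≤ dist (T p).1 (T q).1 * C := by rw [mul_comm]; exact hg _ _

theorem packPre_le_pow_mul_image {lam c : ℝ} (hmono : Monotone h) (hlam : 0 ≤ lam)
    (hdbl : ∀ x : ℝ, 0 < x → h (2 * x) ≤ lam * h x) (hc : 0 < c) {g : E → E}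
    (hg : ∀ x y, c * dist x y ≤ dist (g x) (g y)) {k : ℕ} (hk : 1 ≤ 2 ^ k * c) (A : Set E) :
    packPre h A ≤ ENNReal.ofReal lam ^ k * packPre h (g '' A) := by
  refine packPre_le_mul_of_packPreδ_le (by simp) fun δ hδ =>
    ⟨δ / c, by positivity, packPreδ_le_mul_of_map (fun p => (g p.1, c * p.2)) _
      (fun p hp hr hrδ => ⟨Set.mem_image_of_mem g hp, by positivity, ?_⟩) (fun p hp hr => ?_)
      (fun p q hp hq hr hr' hlt => ?_)⟩
  · rwa [le_div_iff₀ hc, mul_comm] at hrδ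
  · rw [← ENNReal.ofReal_pow hlam, ← ENNReal.ofReal_mul (by positivity)]
    refine ENNReal.ofReal_le_ofReal ?_
    calc h (2 * p.2) = h (2 ^ k * (2 * p.2 / 2 ^ k)) := by field_simp
      _ ≤ lam ^ k * h (2 * p.2 / 2 ^ k) := apply_two_pow_mul_le hlam hdbl k (by positivity)
      _ ≤ lam ^ k * h (2 * (c * p.2)) := by
        refine mul_le_mul_of_nonneg_left (hmono ?_) (by positivity)
        rw [div_le_iff₀ (by positivity)]
        nlinarith
  · calc c * p.2 + c * q.2 = c * (p.2 + q.2) := by ring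
      _ < c * dist p.1 q.1 := by gcongr
      _ ≤ dist (g p.1) (g q.1) := hg _ _

theorem IsCompact.packMeasure_eq_top_of_packPre_inter_ball {lam : ℝ} (hlam : 0 ≤ lam)
    (hdbl : ∀ x : ℝ, 0 < x → h (2 * x) ≤ lam * h x) {K : Set E} (hK : IsCompact K)
    (hne : K.Nonempty) (hloc : ∀ z ∈ K, ∀ ε > 0, packPre h (K ∩ ball z ε) = ⊤) :
    packMeasure h K = ⊤ := by
  refine eq_top_iff.2 <| le_iInf₂ fun C hC => ?_
  obtain ⟨n, z, hz, ε, hε, hball⟩ := hK.exists_inter_ball_subset_closure hne hC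
  have hclosure : ⊤ ≤ ENNReal.ofReal lam * packPre h (K ∩ C n) := by
    rw [← hloc z hz ε hε]
    exact (packPre_mono hball).trans (packPre_closure_le hlam hdbl _)
  have htop : packPre h (K ∩ C n) = ⊤ :=
    ENNReal.eq_top_of_top_le_mul ENNReal.ofReal_ne_top hclosure
  calc ⊤ = packPre h (K ∩ C n) := htop.symm
    _ ≤ packPre h (C n) := packPre_mono Set.inter_subset_right
    _ ≤ ∑' n, packPre h (C n) := ENNReal.le_tsum n

end NormedPacking

namespace CodeTreeSystem

variable {d 𝒩 : ℕ} {Λ : Type*} [MeasurableSpace Λ] (R : CodeTreeSystem d 𝒩 Λ)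

theorem alive_append (τ : List (Fin 𝒩) → Λ) (v w : List (Fin 𝒩)) :
    R.alive τ (v ++ w) = (R.alive τ v && R.alive (fun u => τ (v ++ u)) w) := by
  induction v generalizing τ with
  | nil => simp [alive]
  | cons a v ih =>
    rw [List.cons_append, alive, alive, ih, Bool.and_assoc]
    rfl

theorem nodeMap_append (τ : List (Fin 𝒩) → Λ) (v w : List (Fin 𝒩)) :
    R.nodeMap τ (v ++ w) = R.nodeMap τ v ∘ R.nodeMap (fun u => τ (v ++ u)) w := by
  induction v generalizing τ with
  | nil => rfl
  | cons a v ih =>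
    rw [List.cons_append, nodeMap, nodeMap, ih]
    rfl

theorem nodeMap_image_subset (τ : List (Fin 𝒩) → Λ) (v : List (Fin 𝒩)) :
    R.nodeMap τ v '' R.Δ ⊆ R.Δ := by
  induction v generalizing τ with
  | nil => simp [nodeMap]
  | cons a v ih =>
    rw [nodeMap, Set.image_comp]
    refine (Set.image_mono (ih _)).trans ?_
    split_ifs
    · exact R.hΔsub _ _
    · simp

theorem cmax_pos (l : Λ) : 0 < R.cmax :=
  R.hcmin.trans_le ((R.hc l ⟨0, R.hNpos l⟩).1.trans (R.hc l ⟨0, R.hNpos l⟩).2)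

theorem pow_mul_dist_le_dist_nodeMap {τ : List (Fin 𝒩) → Λ} {v : List (Fin 𝒩)}
    (hv : R.alive τ v = true) (x y : EuclideanSpace ℝ (Fin d)) :
    R.cmin ^ v.length * dist x y ≤ dist (R.nodeMap τ v x) (R.nodeMap τ v y) := by
  induction v generalizing τ with
  | nil => simp [nodeMap]
  | cons a v ih =>
    obtain ⟨hN, hv⟩ := by simpa [alive] using hv
    simp only [nodeMap, Function.comp_apply, List.length_cons, dif_pos hN]
    calc R.cmin ^ (v.length + 1) * dist x y
        = R.cmin * (R.cmin ^ v.length * dist x y) := by ring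
      _ ≤ R.cmin * dist (R.nodeMap _ v x) (R.nodeMap _ v y) := by
        gcongr
        exacts [R.hcmin.le, ih hv]
      _ ≤ _ := (R.hbilip _ _ _ _).1

theorem dist_nodeMap_le_pow_mul {τ : List (Fin 𝒩) → Λ} {v : List (Fin 𝒩)}
    (hv : R.alive τ v = true) (x y : EuclideanSpace ℝ (Fin d)) :
    dist (R.nodeMap τ v x) (R.nodeMap τ v y) ≤ R.cmax ^ v.length * dist x y := by
  induction v generalizing τ with
  | nil => simp [nodeMap]
  | cons a v ih =>
    obtain ⟨hN, hv⟩ := by simpa [alive] using hv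
    simp only [nodeMap, Function.comp_apply, List.length_cons, dif_pos hN]
    calc _ ≤ R.cmax * dist (R.nodeMap _ v x) (R.nodeMap _ v y) := (R.hbilip _ _ _ _).2
      _ ≤ R.cmax * (R.cmax ^ v.length * dist x y) := by
        gcongr
        exacts [(R.cmax_pos (τ [])).le, ih hv]
      _ = R.cmax ^ (v.length + 1) * dist x y := by ring

theorem nodeMap_injective {τ : List (Fin 𝒩) → Λ} {v : List (Fin 𝒩)}
    (hv : R.alive τ v = true) : Function.Injective (R.nodeMap τ v) := fun x y hxy => by
  have := R.pow_mul_dist_le_dist_nodeMap hv x y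
  rw [hxy, dist_self] at this
  exact dist_le_zero.1 (nonpos_of_mul_nonpos_right this (pow_pos R.hcmin _))

theorem nodeMap_continuous {τ : List (Fin 𝒩) → Λ} {v : List (Fin 𝒩)}
    (hv : R.alive τ v = true) : Continuous (R.nodeMap τ v) :=
  (LipschitzWith.of_dist_le_mul (K := ⟨_, pow_nonneg (R.cmax_pos (τ [])).le v.length⟩)
    (R.dist_nodeMap_le_pow_mul hv)).continuous

def aliveWords (τ : List (Fin 𝒩) → Λ) (n : ℕ) : Set (List (Fin 𝒩)) :=
  {v | v.length = n ∧ R.alive τ v = true}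

theorem finite_aliveWords (τ : List (Fin 𝒩) → Λ) (n : ℕ) : (R.aliveWords τ n).Finite :=
  (List.finite_length_eq (Fin 𝒩) n).subset fun _ hv => hv.1

def levelSet (τ : List (Fin 𝒩) → Λ) (n : ℕ) : Set (EuclideanSpace ℝ (Fin d)) :=
  ⋃ v ∈ R.aliveWords τ n, R.nodeMap τ v '' R.Δ

theorem attractor_eq_iInter_levelSet (τ : List (Fin 𝒩) → Λ) :
    R.attractor τ = ⋂ n, R.levelSet τ n := by
  refine Set.iInter_congr fun n => Set.ext fun x => ?_
  simp only [levelSet, aliveWords, Set.mem_iUnion, Set.mem_ofPred_eq, exists_prop]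
  constructor
  · rintro ⟨v, hv, hx⟩
    exact ⟨List.ofFn v, ⟨List.length_ofFn, hv⟩, hx⟩
  · rintro ⟨v, ⟨rfl, hv⟩, hx⟩
    exact ⟨v.get, by rwa [List.ofFn_get], by rwa [List.ofFn_get]⟩

theorem levelSet_subset (τ : List (Fin 𝒩) → Λ) (n : ℕ) : R.levelSet τ n ⊆ R.Δ :=
  Set.iUnion₂_subset fun v _ => R.nodeMap_image_subset τ v

theorem levelSet_add (τ : List (Fin 𝒩) → Λ) (n k : ℕ) :
    R.levelSet τ (n + k) =
      ⋃ v ∈ R.aliveWords τ n, R.nodeMap τ v '' R.levelSet (fun u => τ (v ++ u)) k := by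
  ext x
  simp only [levelSet, aliveWords, Set.image_iUnion₂, Set.mem_iUnion, Set.mem_ofPred_eq,
    exists_prop, ← Set.image_comp, ← nodeMap_append]
  constructor
  · rintro ⟨u, ⟨hlen, hu⟩, hx⟩
    rw [← List.take_append_drop n u, alive_append, Bool.and_eq_true] at hu
    rw [← List.take_append_drop n u] at hx
    exact ⟨u.take n, ⟨by simp [hlen], hu.1⟩, u.drop n, ⟨by simp [hlen], hu.2⟩, hx⟩
  · rintro ⟨v, ⟨rfl, hv⟩, w, ⟨rfl, hw⟩, hx⟩
    exact ⟨v ++ w, ⟨List.length_append, by rw [alive_append, hv, hw]; rfl⟩, hx⟩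

theorem levelSet_antitone (τ : List (Fin 𝒩) → Λ) : Antitone (R.levelSet τ) :=
  antitone_nat_of_succ_le fun n => by
    rw [levelSet_add]
    exact Set.iUnion₂_mono fun v _ => Set.image_mono (R.levelSet_subset _ 1)

theorem attractor_subset (τ : List (Fin 𝒩) → Λ) : R.attractor τ ⊆ R.Δ := by
  rw [attractor_eq_iInter_levelSet]
  exact (Set.iInter_subset _ 0).trans (R.levelSet_subset τ 0)

theorem isCompact_attractor (τ : List (Fin 𝒩) → Λ) : IsCompact (R.attractor τ) := by
  have hlevel : ∀ n, IsCompact (R.levelSet τ n) := fun n =>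
    (R.finite_aliveWords τ n).isCompact_biUnion fun v hv =>
      R.hΔcompact.image (R.nodeMap_continuous hv.2)
  rw [attractor_eq_iInter_levelSet]
  exact R.hΔcompact.of_isClosed_subset (isClosed_iInter fun n => (hlevel n).isClosed)
    ((Set.iInter_subset _ 0).trans (R.levelSet_subset τ 0))

theorem attractor_eq_biUnion (τ : List (Fin 𝒩) → Λ) (n : ℕ) :
    R.attractor τ =
      ⋃ v ∈ R.aliveWords τ n, R.nodeMap τ v '' R.attractor (fun u => τ (v ++ u)) := by
  have : Finite (R.aliveWords τ n) := (R.finite_aliveWords τ n).to_subtype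
  simp only [attractor_eq_iInter_levelSet, Set.biUnion_eq_iUnion]
  calc ⋂ k, R.levelSet τ k = ⋂ k, R.levelSet τ (n + k) := by
        simp only [add_comm n, (R.levelSet_antitone τ).iInter_nat_add]
    _ = ⋂ k, ⋃ v : R.aliveWords τ n,
          R.nodeMap τ v '' R.levelSet (fun u => τ (v ++ u)) k := by
        simp only [levelSet_add, Set.biUnion_eq_iUnion]
    _ = ⋃ v : R.aliveWords τ n, ⋂ k,
          R.nodeMap τ v '' R.levelSet (fun u => τ (v ++ u)) k :=
        Set.iInter_iUnion_of_antitone fun v =>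
          fun _ _ hkl => Set.image_mono (R.levelSet_antitone _ hkl)
    _ = _ := Set.iUnion_congr fun v =>
        ((R.nodeMap_injective v.2.2).injOn.image_iInter_eq).symm

variable {h : ℝ → ℝ}

theorem packPre_attractor_subtree_eq_top (hmono : Monotone h) {τ : List (Fin 𝒩) → Λ} {m : ℕ}
    (hneck : R.IsNeck τ m) {v : List (Fin 𝒩)} (hv : v ∈ R.aliveWords τ m)
    (htop : packPre h (R.attractor τ) = ⊤) :
    packPre h (R.attractor (fun u => τ (v ++ u))) = ⊤ := by
  have hS := R.finite_aliveWords τ m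
  have hcover : R.attractor τ ⊆
      ⋃ w ∈ hS.toFinset, R.nodeMap τ w '' R.attractor (fun u => τ (w ++ u)) := by
    simp only [Set.Finite.mem_toFinset, ← attractor_eq_biUnion, subset_rfl]
  have hsum := (packPre_mono (h := h) hcover).trans (packPre_biUnion_le _ _)
  rw [htop, top_le_iff, ENNReal.sum_eq_top] at hsum
  obtain ⟨w, hw, hwtop⟩ := hsum
  rw [hS.mem_toFinset] at hw
  rw [funext (hneck w v hw.1 hv.1 hw.2 hv.2)] at hwtop
  have hcmax := R.cmax_pos (τ [])
  exact top_le_iff.1 <| hwtop ▸ packPre_image_le hmono (pow_pos hcmax _)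
    (pow_le_one₀ hcmax.le R.hcmax.le) (R.dist_nodeMap_le_pow_mul hw.2) _

theorem exists_neck_piece_subset_inter_ball {τ : List (Fin 𝒩) → Λ}
    (hnecks : ∀ n : ℕ, ∃ m, n ≤ m ∧ R.IsNeck τ m) {z : EuclideanSpace ℝ (Fin d)}
    (hz : z ∈ R.attractor τ) {ε : ℝ} (hε : 0 < ε) :
    ∃ m, R.IsNeck τ m ∧ ∃ v ∈ R.aliveWords τ m,
      R.nodeMap τ v '' R.attractor (fun u => τ (v ++ u)) ⊆ R.attractor τ ∩ ball z ε := by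
  have hcmax := R.cmax_pos (τ [])
  have hsmall : ∀ᶠ n in atTop, R.cmax ^ n * diam R.Δ < ε := by
    have := (tendsto_pow_atTop_nhds_zero_of_lt_one hcmax.le R.hcmax).mul_const (diam R.Δ)
    rw [zero_mul] at this
    exact this.eventually (gt_mem_nhds hε)
  obtain ⟨N, hN⟩ := eventually_atTop.1 hsmall
  obtain ⟨m, hNm, hneck⟩ := hnecks N
  have hpieces := R.attractor_eq_biUnion τ m
  obtain ⟨v, hv, y, hy, rfl⟩ : ∃ v ∈ R.aliveWords τ m,
      z ∈ R.nodeMap τ v '' R.attractor (fun u => τ (v ++ u)) := by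
    simpa only [hpieces, Set.mem_iUnion, exists_prop] using hz
  refine ⟨m, hneck, v, hv, Set.subset_inter ?_ ?_⟩
  · exact hpieces ▸
      Set.subset_biUnion_of_mem (u := fun w => R.nodeMap τ w '' R.attractor (τ <| w ++ ·)) hv
  · rintro _ ⟨x, hx, rfl⟩
    calc dist (R.nodeMap τ v x) (R.nodeMap τ v y) ≤ R.cmax ^ m * dist x y :=
          hv.1 ▸ R.dist_nodeMap_le_pow_mul hv.2 x y
      _ ≤ R.cmax ^ m * diam R.Δ := by
          gcongr
          exact dist_le_diam_of_mem R.hΔcompact.isBounded (R.attractor_subset _ hx)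
            (R.attractor_subset _ hy)
      _ < ε := hN m hNm

theorem packPre_attractor_inter_ball_eq_top (hmono : Monotone h) {lam : ℝ} (hlam : 0 ≤ lam)
    (hdbl : ∀ x : ℝ, 0 < x → h (2 * x) ≤ lam * h x) {τ : List (Fin 𝒩) → Λ}
    (hnecks : ∀ n : ℕ, ∃ m, n ≤ m ∧ R.IsNeck τ m) (htop : packPre h (R.attractor τ) = ⊤)
    {z : EuclideanSpace ℝ (Fin d)} (hz : z ∈ R.attractor τ) {ε : ℝ} (hε : 0 < ε) :
    packPre h (R.attractor τ ∩ ball z ε) = ⊤ := by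
  obtain ⟨m, hneck, v, hv, hpiece⟩ := R.exists_neck_piece_subset_inter_ball hnecks hz hε
  have hcmin : 0 < R.cmin ^ m := pow_pos R.hcmin m
  obtain ⟨k, hk⟩ := pow_unbounded_of_one_lt (R.cmin ^ m)⁻¹ one_lt_two
  have hexpand := packPre_le_pow_mul_image hmono hlam hdbl hcmin
    (hv.1 ▸ R.pow_mul_dist_le_dist_nodeMap hv.2) ((inv_lt_iff_one_lt_mul₀ hcmin).1 hk).le
    (R.attractor fun u => τ (v ++ u))
  rw [R.packPre_attractor_subtree_eq_top hmono hneck hv htop] at hexpand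
  exact top_le_iff.1 <|
    ENNReal.eq_top_of_top_le_mul (by simp) hexpand ▸ packPre_mono hpiece

end CodeTreeSystem

/-- zero–infinity dichotomy transfer for the packing measure of a random
code-tree attractor built from uniformly bi-Lipschitz contractions: for any doubling gauge
function `h`, `𝒫₀^h(F_τ) = ∞` implies `𝒫^h(F_τ) = ∞` and `𝒫₀^h(F_τ) = 0` implies
`𝒫^h(F_τ) = 0`. -/
theorem packing_dichotomy_transfer {d 𝒩 : ℕ} {Λ : Type*} [MeasurableSpace Λ]
    (R : CodeTreeSystem d 𝒩 Λ) (τ : List (Fin 𝒩) → Λ)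
    (hnecks : ∀ n : ℕ, ∃ m, n ≤ m ∧ R.IsNeck τ m)
    (hne : (R.attractor τ).Nonempty)
    (h : ℝ → ℝ) (hgauge : IsGauge h)
    (hdoubling : ∃ lam : ℝ, 1 < lam ∧ ∀ x : ℝ, 0 < x → h (2 * x) ≤ lam * h x) :
    (packPre h (R.attractor τ) = ⊤ → packMeasure h (R.attractor τ) = ⊤) ∧
    (packPre h (R.attractor τ) = 0 → packMeasure h (R.attractor τ) = 0) := by
  obtain ⟨lam, hlam, hdbl⟩ := hdoubling
  refine ⟨fun htop => ?_, fun hzero => le_zero_iff.1 (hzero ▸ packMeasure_le_packPre _)⟩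
  have hlam₀ : 0 ≤ lam := by linarith
  exact (R.isCompact_attractor τ).packMeasure_eq_top_of_packPre_inter_ball hlam₀ hdbl hne
    fun z hz ε hε => R.packPre_attractor_inter_ball_eq_top hgauge.1 hlam₀ hdbl hnecks htop hz hε
end
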